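/- arXiv:2404.11293 — 2 statements merged into one kernel-verified Lean document; each statement's English description precedes it below -/
import Mathlib

section
/- Let G be a group acting by isometries on a metric space X, let x ∈ X, h ≥ 0, and let A, B ⊆ G be countable subsets not containing the identity. Suppose that for each k ≥ 1 the map (a₁, b₁, …, a_k, b_k) ↦ a₁b₁⋯a_k b_k from (A × B)^k to G is injective, and that its images for distinct k are pairwise disjoint. If ∑_{a ∈ A} exp(−h·d(x, a·x)) > 1 and ∑_{b ∈ B} exp(−h·d(x, b·x)) > 1, then the Poincaré series ∑_{γ ∈ G} exp(−h·d(x, γ·x)) diverges. In particular, the critical exponent of G is strictly greater than h. -/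
open scoped ENNReal

private lemma tsum_pi_prod {ι : Type*} (g : ι → ℝ≥0∞) :
    ∀ k : ℕ, ∑' w : Fin k → ι, ∏ i, g (w i) = (∑' i, g i) ^ k := by
  intro k
  induction k with
  | zero =>
    rw [pow_zero]
    have : ∀ w : Fin 0 → ι, (∏ i, g (w i)) = 1 := fun w => by simp
    rw [tsum_congr this]
    exact tsum_eq_single (fun i => i.elim0) fun b hb =>
      absurd (Subsingleton.elim b _) hb
  | succ k ih =>
    have he := (Fin.consEquiv (fun _ : Fin (k + 1) => ι)).tsum_eq
      (f := fun w : Fin (k + 1) → ι => ∏ i, g (w i))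
    rw [← he]
    have hcongr : ∀ p : ι × (Fin k → ι),
        (∏ i, g ((Fin.consEquiv (fun _ : Fin (k + 1) => ι)) p i))
          = g p.1 * ∏ i, g (p.2 i) := by
      intro p
      simp [Fin.consEquiv, Fin.prod_univ_succ]
    rw [tsum_congr hcongr, ENNReal.tsum_prod']
    simp_rw [ENNReal.tsum_mul_left]
    rw [ENNReal.tsum_mul_right, ih, pow_succ, mul_comm]

/-- Free-product lower bound for Poincaré series: if `A, B ⊆ G ∖ {1}` are
countable sets such that the alternating product maps
`(a₁,b₁,…,a_k,b_k) ↦ a₁b₁⋯a_kb_k` are injective with pairwise disjoint images,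
and the Poincaré sums over `A` and over `B` at exponent `h` both exceed `1`,
then the Poincaré series of `G` at exponent `h` diverges. -/
theorem poincare_series_diverges_of_free_product {G : Type*} [Group G]
    {X : Type*} [MetricSpace X] [MulAction G X]
    (hiso : ∀ g : G, Isometry fun y : X => g • y)
    (x : X) (h : ℝ) (hh : 0 ≤ h)
    (A B : Set G) (hAc : A.Countable) (hBc : B.Countable)
    (hA1 : (1 : G) ∉ A) (hB1 : (1 : G) ∉ B)
    (Φ : ∀ k : ℕ, (Fin k → A × B) → G)
    (hΦ : ∀ (k : ℕ) (w : Fin k → A × B),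
      Φ k w = (List.ofFn fun i => ((w i).1 : G) * ((w i).2 : G)).prod)
    (hinj : ∀ k : ℕ, 1 ≤ k → Function.Injective (Φ k))
    (hdisj : ∀ k l : ℕ, 1 ≤ k → 1 ≤ l → k ≠ l →
      Disjoint (Set.range (Φ k)) (Set.range (Φ l)))
    (hAsum : 1 < ∑' a : A, ENNReal.ofReal (Real.exp (-(h * dist x ((a : G) • x)))))
    (hBsum : 1 < ∑' b : B, ENNReal.ofReal (Real.exp (-(h * dist x ((b : G) • x))))) :
    ∑' γ : G, ENNReal.ofReal (Real.exp (-(h * dist x (γ • x)))) = ⊤ := by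
  set f : G → ℝ≥0∞ := fun γ => ENNReal.ofReal (Real.exp (-(h * dist x (γ • x)))) with hf
  -- triangle inequality for displacements
  have hdist : ∀ g g' : G, dist x ((g * g') • x) ≤ dist x (g • x) + dist x (g' • x) := by
    intro g g'
    calc dist x ((g * g') • x) ≤ dist x (g • x) + dist (g • x) ((g * g') • x) :=
          dist_triangle _ _ _
      _ = dist x (g • x) + dist x (g' • x) := by
          rw [mul_smul]
          congr 1
          exact (hiso g).dist_eq x (g' • x)
  have hmono : ∀ {d₁ d₂ : ℝ}, d₁ ≤ d₂ →
      ENNReal.ofReal (Real.exp (-(h * d₂))) ≤ ENNReal.ofReal (Real.exp (-(h * d₁))) := by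
    intro d₁ d₂ hd
    exact ENNReal.ofReal_le_ofReal (Real.exp_le_exp.2 (by nlinarith))
  have hsub : ∀ g g' : G, f g * f g' ≤ f (g * g') := by
    intro g g'
    have h1 : f g * f g'
        = ENNReal.ofReal (Real.exp (-(h * (dist x (g • x) + dist x (g' • x))))) := by
      rw [hf]; dsimp only
      rw [← ENNReal.ofReal_mul (Real.exp_nonneg _), ← Real.exp_add]
      congr 2; ring
    rw [h1]
    exact hmono (hdist g g')
  have hone : f 1 = 1 := by
    simp [hf, one_smul]
  have hlist : ∀ l : List G, (l.map f).prod ≤ f l.prod := by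
    intro l
    induction l with
    | nil => simp [hone]
    | cons a l ih =>
      calc (List.map f (a :: l)).prod = f a * (l.map f).prod := by simp
        _ ≤ f a * f l.prod := mul_le_mul_right ih _
        _ ≤ f (a * l.prod) := hsub _ _
        _ = f ((a :: l).prod) := by simp
  set g : A × B → ℝ≥0∞ := fun p => f p.1 * f p.2 with hg
  have hword : ∀ (k : ℕ) (w : Fin k → A × B), ∏ i, g (w i) ≤ f (Φ k w) := by
    intro k w
    rw [hΦ k w]
    calc ∏ i, g (w i) ≤ ∏ i, f (((w i).1 : G) * ((w i).2 : G)) :=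
          Finset.prod_le_prod' fun i _ => hsub _ _
      _ = ((List.ofFn fun i => ((w i).1 : G) * ((w i).2 : G)).map f).prod := by
          rw [List.map_ofFn, List.prod_ofFn]; rfl
      _ ≤ _ := hlist _
  -- the total sum over pairs
  set S : ℝ≥0∞ := ∑' p : A × B, g p with hS
  have hSval : S = (∑' a : A, f a) * (∑' b : B, f b) := by
    rw [hS, ENNReal.tsum_prod']
    simp_rw [hg, ENNReal.tsum_mul_left, ENNReal.tsum_mul_right]
  have hS1 : 1 < S := by
    rw [hSval]
    calc (1 : ℝ≥0∞) < ∑' a : A, f a := hAsum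
      _ = (∑' a : A, f a) * 1 := (mul_one _).symm
      _ ≤ (∑' a : A, f a) * (∑' b : B, f b) := mul_le_mul_right hBsum.le _
  -- the injection from all words of positive length into G
  set ι : (Σ _k : ℕ, (Fin (_k + 1) → A × B)) → G := fun σ => Φ (σ.1 + 1) σ.2 with hι
  have hιinj : Function.Injective ι := by
    rintro ⟨k, w⟩ ⟨l, v⟩ hkl
    by_cases hkl' : k = l
    · subst hkl'
      have hw : w = v := hinj (k + 1) (Nat.le_add_left 1 k) hkl
      subst hw; rfl
    · exfalso
      have hd := hdisj (k + 1) (l + 1) (Nat.le_add_left 1 k) (Nat.le_add_left 1 l)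
        (by omega)
      exact Set.disjoint_left.1 hd ⟨w, rfl⟩ ⟨v, hkl.symm⟩
  have hgeo : ∑' k : ℕ, S ^ (k + 1) = ⊤ := by
    have htop : ∑' k : ℕ, S ^ k = ⊤ := by
      rw [ENNReal.tsum_geometric, tsub_eq_zero_of_le hS1.le, ENNReal.inv_zero]
    refine top_le_iff.1 ?_
    rw [← htop]
    refine ENNReal.tsum_le_tsum fun k => ?_
    calc S ^ k = S ^ k * 1 := (mul_one _).symm
      _ ≤ S ^ k * S := mul_le_mul_right hS1.le _
      _ = S ^ (k + 1) := (pow_succ S k).symm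
  refine top_le_iff.1 ?_
  calc (⊤ : ℝ≥0∞) = ∑' k : ℕ, S ^ (k + 1) := hgeo.symm
    _ = ∑' k : ℕ, ∑' w : Fin (k + 1) → A × B, ∏ i, g (w i) := by
        refine tsum_congr fun k => ?_
        rw [tsum_pi_prod g (k + 1)]
    _ ≤ ∑' k : ℕ, ∑' w : Fin (k + 1) → A × B, f (Φ (k + 1) w) :=
        ENNReal.tsum_le_tsum fun k => ENNReal.tsum_le_tsum fun w => hword _ w
    _ = ∑' σ : (Σ _k : ℕ, (Fin (_k + 1) → A × B)), f (ι σ) :=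
        (ENNReal.tsum_sigma' fun σ => f (ι σ)).symm
    _ ≤ ∑' γ : G, f γ := ENNReal.tsum_comp_le_tsum_of_injective hιinj f
end

section
/- Let f(z) = √(Im z) on the upper half-plane ℍ with hyperbolic area measure μ (density y^{-2} dx dy), and for τ > 0 let (A_τ f)(z) = μ(B_τ(z))^{-1} ∫_{B_τ(z)} f dμ denote the average of f over the hyperbolic ball of radius τ centered at z. Then there is a constant C > 0 such that for all τ ≥ 1 and all z ∈ ℍ, (A_τ f)(z) ≤ C·τ·exp(−τ/2)·f(z). In particular (A_τ f)(z)/f(z) → 0 uniformly in z as τ → ∞. -/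
/-!
Write `z = x₀ + i a`, `w = x + i y` and `E = exp τ`. The formula for `cosh` of the hyperbolic
distance turns `dist w z < τ` into `(x - x₀)² E < (yE - a)(aE - y)`. Hence the ball lies in the
region `a/E ≤ y ≤ aE`, `|x - x₀| ≤ √(aEy)`, over which `√y · y⁻² dx dy` integrates to
`2√(aE) ∫ dy/y = 4τ√(aE)`; and for `E > 2` it contains the rectangle `2a/E ≤ y ≤ 3a/E`,
`|x - x₀| ≤ a/2`, of hyperbolic area at least `E/9`. The average is therefore at most
`36 τ E^{-1/2} √a`.
-/

open MeasureTheory UpperHalfPlane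
open scoped ENNReal

noncomputable instance : MeasurableSpace UpperHalfPlane :=
  MeasurableSpace.comap (fun z : UpperHalfPlane => (z : ℂ)) inferInstance

/-- The hyperbolic area measure on the upper half-plane, with density
`(Im z)⁻²` with respect to Lebesgue measure. -/
noncomputable def hypMeasure : Measure UpperHalfPlane :=
  ((volume : Measure ℂ).comap fun z : UpperHalfPlane => (z : ℂ)).withDensity
    fun z => ENNReal.ofReal ((z.im ^ 2)⁻¹)

theorem lintegral_Icc_ofReal_inv {a b : ℝ} (ha : 0 < a) (hab : a ≤ b) :
    ∫⁻ y in Set.Icc a b, ENNReal.ofReal y⁻¹ = ENNReal.ofReal (Real.log (b / a)) := by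
  have hpos : ∀ y ∈ Set.Icc a b, 0 < y := fun y hy => ha.trans_le hy.1
  rw [← ofReal_integral_eq_lintegral_ofReal, integral_Icc_eq_integral_Ioc,
    ← intervalIntegral.integral_of_le hab, integral_inv_of_pos ha (ha.trans_le hab)]
  · exact ContinuousOn.integrableOn_Icc (continuousOn_inv₀.mono fun y hy => (hpos y hy).ne')
  · filter_upwards [ae_restrict_mem measurableSet_Icc] with y hy using inv_nonneg.2 (hpos y hy).le

def fiberedOverIm (x₀ : ℝ) (I : Set ℝ) (r : ℝ → ℝ) : Set ℂ :=
  {w | w.im ∈ I ∧ w.re ∈ Metric.closedBall x₀ (r w.im)}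

theorem setLIntegral_fiberedOverIm {x₀ : ℝ} {I : Set ℝ} {r : ℝ → ℝ} (hI : MeasurableSet I)
    (hr : Measurable r) {h : ℝ → ℝ≥0∞} (hh : Measurable h) :
    ∫⁻ w in fiberedOverIm x₀ I r, h w.im = ∫⁻ y in I, ENNReal.ofReal (2 * r y) * h y := by
  set P : Set (ℝ × ℝ) := {p | p.2 ∈ I ∧ p.1 ∈ Metric.closedBall x₀ (r p.2)}
  have hP : MeasurableSet P :=
    (measurable_snd hI).inter (measurableSet_le (by fun_prop) (hr.comp measurable_snd))
  have hfiber (y : ℝ) : ∫⁻ x, P.indicator (fun p => h p.2) (x, y)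
      = I.indicator (fun y => ENNReal.ofReal (2 * r y) * h y) y := by
    by_cases hy : y ∈ I
    · have hslice : (fun x => (x, y)) ⁻¹' P = Metric.closedBall x₀ (r y) :=
        Set.ext fun _ => and_iff_right hy
      simp_rw [← Set.indicator_comp_right fun x => (x, y), Function.comp_def]
      rw [hslice, lintegral_indicator_const Metric.isClosed_closedBall.measurableSet,
        Real.volume_closedBall, Set.indicator_of_mem hy, mul_comm]
    · simp [P, hy]
  calc ∫⁻ w in fiberedOverIm x₀ I r, h w.im
      = ∫⁻ p in P, h p.2 :=
        Complex.volume_preserving_equiv_real_prod.setLIntegral_comp_preimage_emb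
          Complex.measurableEquivRealProd.measurableEmbedding (fun p => h p.2) P
    _ = ∫⁻ y, ∫⁻ x, P.indicator (fun p => h p.2) (x, y) := by
        rw [← lintegral_indicator hP, Measure.volume_eq_prod]
        exact lintegral_prod_symm' _ ((hh.comp measurable_snd).indicator hP)
    _ = ∫⁻ y in I, ENNReal.ofReal (2 * r y) * h y := by
        simp_rw [hfiber]
        exact lintegral_indicator hI _

theorem setLIntegral_hypMeasure (s : Set ℍ) (g : ℂ → ℝ≥0∞) :
    ∫⁻ ζ in s, g ζ ∂hypMeasure = ∫⁻ w in (↑) '' s, ENNReal.ofReal ((w.im ^ 2)⁻¹) * g w := by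
  have hcoe : MeasurePreserving UpperHalfPlane.coe (volume.comap UpperHalfPlane.coe)
      (volume.restrict (Set.range UpperHalfPlane.coe)) :=
    ⟨measurable_coe, by rw [measurableEmbedding_coe.map_comap]⟩
  rw [hypMeasure, setLIntegral_withDensity_eq_setLIntegral_mul_non_measurable₀' _ _
      (by fun_prop) _ (.of_forall fun _ => ENNReal.ofReal_lt_top)]
  exact (hcoe.setLIntegral_comp_emb measurableEmbedding_coe
    (fun w => ENNReal.ofReal ((w.im ^ 2)⁻¹) * g w) s).trans <| by
    rw [Measure.restrict_restrict' measurableEmbedding_coe.measurableSet_range,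
      Set.inter_eq_self_of_subset_left (Set.image_subset_range _ _)]

theorem dist_lt_iff_sq_re_sub_mul_exp_lt (z w : ℍ) {τ : ℝ} (hτ : 0 ≤ τ) :
    dist w z < τ ↔
      (w.re - z.re) ^ 2 * Real.exp τ < (w.im * Real.exp τ - z.im) * (z.im * Real.exp τ - w.im) := by
  have hcosh := Real.cosh_lt_cosh (x := dist w z) (y := τ)
  rw [abs_of_nonneg dist_nonneg, abs_of_nonneg hτ] at hcosh
  rw [← hcosh, cosh_dist, Real.cosh_eq, Real.exp_neg, Complex.dist_eq_re_im,
    Real.sq_sqrt (by positivity), coe_re, coe_re, coe_im, coe_im]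
  have key : (Real.exp τ + (Real.exp τ)⁻¹) / 2
        - (1 + ((w.re - z.re) ^ 2 + (w.im - z.im) ^ 2) / (2 * w.im * z.im))
      = ((w.im * Real.exp τ - z.im) * (z.im * Real.exp τ - w.im)
          - (w.re - z.re) ^ 2 * Real.exp τ) / (2 * w.im * z.im * Real.exp τ) := by
    field_simp
    ring
  rw [← sub_pos, key, div_pos_iff_of_pos_right (by positivity), sub_pos]

theorem coe_image_ball_subset_fiberedOverIm (z : ℍ) {τ : ℝ} (hτ : 0 ≤ τ) :
    (↑) '' Metric.ball z τ ⊆ fiberedOverIm z.re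
      (Set.Icc (z.im / Real.exp τ) (z.im * Real.exp τ)) (fun y => √(z.im * Real.exp τ * y)) := by
  rintro _ ⟨w, hw, rfl⟩
  rw [Metric.mem_ball, dist_lt_iff_sq_re_sub_mul_exp_lt z w hτ] at hw
  set E := Real.exp τ
  have hE : 1 ≤ E := Real.one_le_exp hτ
  have hy : w.im ≤ w.im * E := le_mul_of_one_le_right w.im_pos.le hE
  have ha : z.im ≤ z.im * E := le_mul_of_one_le_right z.im_pos.le hE
  obtain ⟨hlo, hhi⟩ : 0 < w.im * E - z.im ∧ 0 < z.im * E - w.im := by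
    refine (pos_and_pos_or_neg_and_neg_of_mul_pos
      ((by positivity : (0 : ℝ) ≤ (w.re - z.re) ^ 2 * E).trans_lt hw)).resolve_right ?_
    rintro ⟨h₁, h₂⟩
    linarith
  change w.im ∈ Set.Icc _ _ ∧ w.re ∈ Metric.closedBall _ _
  refine ⟨⟨(div_le_iff₀ (by positivity)).2 (by linarith), by linarith⟩, ?_⟩
  rw [Metric.mem_closedBall, Real.dist_eq]
  refine Real.abs_le_sqrt (le_of_lt (lt_of_mul_lt_mul_right ?_ (by positivity : 0 ≤ E)))
  calc (w.re - z.re) ^ 2 * E < (w.im * E - z.im) * (z.im * E - w.im) := hw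
    _ ≤ (w.im * E) * (z.im * E) := by gcongr <;> linarith [z.im_pos, w.im_pos]
    _ = z.im * E * w.im * E := by ring

theorem fiberedOverIm_subset_coe_image_ball (z : ℍ) {τ : ℝ} (hτ : Real.log 2 < τ) :
    fiberedOverIm z.re (Set.Icc (2 * z.im / Real.exp τ) (3 * z.im / Real.exp τ))
      (fun _ => z.im / 2) ⊆ (↑) '' Metric.ball z τ := by
  rintro w ⟨⟨hlo, hhi⟩, hre⟩
  have hτ₀ : 0 ≤ τ := (Real.log_pos one_lt_two).le.trans hτ.le
  set E := Real.exp τ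
  have hE : 2 < E := (Real.log_lt_iff_lt_exp two_pos).1 hτ
  have ha := z.im_pos
  rw [div_le_iff₀ (by positivity)] at hlo
  rw [le_div_iff₀ (by positivity)] at hhi
  have hy : 0 < w.im := by nlinarith
  refine ⟨⟨w, hy⟩, ?_, rfl⟩
  rw [Metric.mem_ball, dist_lt_iff_sq_re_sub_mul_exp_lt z ⟨w, hy⟩ hτ₀]
  change (w.re - z.re) ^ 2 * E < (w.im * E - z.im) * (z.im * E - w.im)
  rw [Metric.mem_closedBall, Real.dist_eq, abs_le] at hre
  have hsq : (w.re - z.re) ^ 2 ≤ (z.im / 2) ^ 2 := by nlinarith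
  have hE2 : 4 < E ^ 2 := by nlinarith
  have hBE : z.im * (E ^ 2 - 3) ≤ (z.im * E - w.im) * E := by nlinarith
  refine lt_of_mul_lt_mul_right ?_ (by positivity : 0 ≤ E)
  calc (w.re - z.re) ^ 2 * E * E ≤ (z.im / 2) ^ 2 * E ^ 2 := by nlinarith
    _ < z.im * (z.im * (E ^ 2 - 3)) := by nlinarith [mul_pos ha ha]
    _ ≤ (w.im * E - z.im) * ((z.im * E - w.im) * E) :=
        mul_le_mul (by linarith) hBE (by nlinarith) (by linarith)
    _ = (w.im * E - z.im) * (z.im * E - w.im) * E := by ring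

theorem setLIntegral_sqrt_im_ball_le (z : ℍ) {τ : ℝ} (hτ : 0 ≤ τ) :
    ∫⁻ w in Metric.ball z τ, ENNReal.ofReal √w.im ∂hypMeasure
      ≤ ENNReal.ofReal (4 * τ * √(z.im * Real.exp τ)) := by
  set E := Real.exp τ with hE_def
  have ha := z.im_pos
  have hE : 0 < E := Real.exp_pos τ
  have hE₁ : 1 ≤ E := Real.one_le_exp hτ
  have hratio : z.im * E / (z.im / E) = Real.exp (τ + τ) := by
    rw [Real.exp_add, ← hE_def]
    field_simp
  calc ∫⁻ w in Metric.ball z τ, ENNReal.ofReal √w.im ∂hypMeasure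
      = ∫⁻ w in ((↑) : ℍ → ℂ) '' Metric.ball z τ,
          ENNReal.ofReal ((w.im ^ 2)⁻¹) * ENNReal.ofReal √w.im :=
        setLIntegral_hypMeasure _ fun w => ENNReal.ofReal √w.im
    _ ≤ ∫⁻ w in fiberedOverIm z.re (Set.Icc (z.im / E) (z.im * E)) (fun y => √(z.im * E * y)),
          ENNReal.ofReal ((w.im ^ 2)⁻¹) * ENNReal.ofReal √w.im :=
        lintegral_mono_set (coe_image_ball_subset_fiberedOverIm z hτ)
    _ = ∫⁻ y in Set.Icc (z.im / E) (z.im * E),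
          ENNReal.ofReal (2 * √(z.im * E * y)) * (ENNReal.ofReal ((y ^ 2)⁻¹) * ENNReal.ofReal √y) :=
        setLIntegral_fiberedOverIm (h := fun y => ENNReal.ofReal ((y ^ 2)⁻¹) * ENNReal.ofReal √y)
          measurableSet_Icc (by fun_prop) (by fun_prop)
    _ = ∫⁻ y in Set.Icc (z.im / E) (z.im * E),
          ENNReal.ofReal (2 * √(z.im * E)) * ENNReal.ofReal y⁻¹ := by
        refine setLIntegral_congr_fun measurableSet_Icc fun y hy => ?_
        have hy₀ : 0 < y := (div_pos ha hE).trans_le hy.1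
        rw [← ENNReal.ofReal_mul (by positivity), ← ENNReal.ofReal_mul (by positivity),
          ← ENNReal.ofReal_mul (by positivity), Real.sqrt_mul (by positivity)]
        congr 1
        field_simp
        rw [Real.sq_sqrt hy₀.le]
    _ = ENNReal.ofReal (4 * τ * √(z.im * E)) := by
        rw [lintegral_const_mul' _ _ ENNReal.ofReal_ne_top,
          lintegral_Icc_ofReal_inv (by positivity)
            ((div_le_self ha.le hE₁).trans (le_mul_of_one_le_right ha.le hE₁)),
          ← ENNReal.ofReal_mul (by positivity), hratio, Real.log_exp]
        ring_nf

theorem exp_div_nine_le_hypMeasure_ball (z : ℍ) {τ : ℝ} (hτ : Real.log 2 < τ) :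
    ENNReal.ofReal (Real.exp τ / 9) ≤ hypMeasure (Metric.ball z τ) := by
  set E := Real.exp τ
  set I := Set.Icc (2 * z.im / E) (3 * z.im / E)
  calc ENNReal.ofReal (E / 9)
      = ∫⁻ _ in I, ENNReal.ofReal (2 * (z.im / 2)) * ENNReal.ofReal (((3 * z.im / E) ^ 2)⁻¹) := by
        rw [setLIntegral_const, Real.volume_Icc, ← ENNReal.ofReal_mul (by positivity),
          ← ENNReal.ofReal_mul (by positivity)]
        congr 1
        field_simp
        ring
    _ ≤ ∫⁻ y in I, ENNReal.ofReal (2 * (z.im / 2)) * (ENNReal.ofReal ((y ^ 2)⁻¹) * 1) := by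
        refine setLIntegral_mono (by fun_prop) fun y hy => ?_
        have hy₀ : 0 < y := (by positivity : 0 < 2 * z.im / E).trans_le hy.1
        rw [mul_one]
        gcongr
        exact hy.2
    _ = ∫⁻ w in fiberedOverIm z.re I (fun _ => z.im / 2), ENNReal.ofReal ((w.im ^ 2)⁻¹) * 1 :=
        (setLIntegral_fiberedOverIm measurableSet_Icc measurable_const (by fun_prop)).symm
    _ ≤ ∫⁻ w in ((↑) : ℍ → ℂ) '' Metric.ball z τ, ENNReal.ofReal ((w.im ^ 2)⁻¹) * 1 :=
        lintegral_mono_set (fiberedOverIm_subset_coe_image_ball z hτ)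
    _ = hypMeasure (Metric.ball z τ) := by
        rw [← setLIntegral_hypMeasure, setLIntegral_one]

/-- Averaging decay for the Foster–Lyapunov–Margulis function `√(Im z)` on the
hyperbolic plane: there is `C > 0` such that for all `τ ≥ 1` and all `z`, the
average of `√(Im ·)` over the hyperbolic ball `B_τ(z)` is at most
`C · τ · exp(−τ/2) · √(Im z)`. -/
theorem sqrt_im_average_decay :
    ∃ C > (0 : ℝ), ∀ τ ≥ (1 : ℝ), ∀ z : UpperHalfPlane,
      (hypMeasure (Metric.ball z τ))⁻¹
          * ∫⁻ w in Metric.ball z τ, ENNReal.ofReal (Real.sqrt w.im) ∂hypMeasure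
        ≤ ENNReal.ofReal (C * τ * Real.exp (-τ / 2) * Real.sqrt z.im) := by
  refine ⟨36, by norm_num, fun τ hτ z => ?_⟩
  have hlog : Real.log 2 < τ := Real.log_two_lt_d9.trans_le (by linarith)
  have hhalf : Real.exp τ = Real.exp (τ / 2) * Real.exp (τ / 2) := by
    rw [← Real.exp_add, add_halves]
  calc (hypMeasure (Metric.ball z τ))⁻¹
        * ∫⁻ w in Metric.ball z τ, ENNReal.ofReal (Real.sqrt w.im) ∂hypMeasure
      ≤ (ENNReal.ofReal (Real.exp τ / 9))⁻¹ * ENNReal.ofReal (4 * τ * √(z.im * Real.exp τ)) :=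
        mul_le_mul' (ENNReal.inv_le_inv.2 (exp_div_nine_le_hypMeasure_ball z hlog))
          (setLIntegral_sqrt_im_ball_le z (by linarith))
    _ = ENNReal.ofReal (36 * τ * Real.exp (-τ / 2) * Real.sqrt z.im) := by
        rw [← ENNReal.ofReal_inv_of_pos (by positivity), ← ENNReal.ofReal_mul (by positivity)]
        congr 1
        rw [Real.sqrt_mul z.im_pos.le, ← Real.exp_half, neg_div, Real.exp_neg, hhalf]
        field_simp
        ring
end
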